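/- Let s(x) = 2^(−n/2)(−1)^(p(x)) be a quadratic phase state with nonlinear order N := n − log₂ PAR(WHT(s)), where PAR(WHT(s)) = 2^n·max_w|ŝ(w)|^2. If p is bipartite (p(x) = ∑_k q_k(x_C) r_k(x_{C⊥}) with q_k, r_k linear over a bipartition), then 2^(n−N) ≤ PAR_l(s) ≤ 2^(n−N/2). -/

import Mathlib

/-!
Split `x = (a, b)` along `S` and `Sᶜ`; then `p x = f a ⬝ᵥ b` for an additive map `f`. Summing the
character over `b` first shows that the Walsh coefficient at `w = (u, v)` is
`2^(|Sᶜ| - n) ∑_{f a = v} (-1)^(a ⬝ᵥ u)`, so `|ŝ(w)| ≤ ŝ(0) = |ker f| 2^|Sᶜ| / 2^n =: c` and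
`2^(n-N) = 2^n c²`. Walsh vectors are product vectors, whence `PAR_l(s) ≥ 2^n c²`. Conversely the
overlap with a product vector `F(a) G(b)` is `2^(-n/2) ∑_a F(a) Ĝ(f a)`; Cauchy–Schwarz, the bound
`|ker f|` on the fibres of `f` and Parseval for `Ĝ` give `|⟨s, l⟩|² ≤ c`, so
`PAR_l(s) ≤ 2^n c = 2^(n - N/2)`.
-/

open scoped Classical

open Finset Matrix

namespace BipartiteQuadraticState

section SignCharacter

variable (R : Type*) [CommRing R]

def signChar : AddChar (ZMod 2) R where
  toFun t := (-1) ^ t.val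
  map_zero_eq_one' := pow_zero _
  map_add_eq_mul' a b := by rw [ZMod.val_add, ← pow_add, ← neg_one_pow_eq_pow_mod_two]

variable {R}

lemma signChar_apply (t : ZMod 2) : signChar R t = (-1) ^ t.val := rfl

lemma signChar_one : signChar R 1 = -1 := pow_one _

lemma signChar_sum {ι : Type*} (s : Finset ι) (f : ι → ZMod 2) :
    signChar R (∑ i ∈ s, f i) = ∏ i ∈ s, signChar R (f i) := by
  induction s using Finset.induction_on with
  | empty => simp
  | insert i s hi ih => rw [sum_insert hi, prod_insert hi, AddChar.map_add_eq_mul, ih]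

lemma sum_zmod_two {M : Type*} [AddCommMonoid M] (g : ZMod 2 → M) : ∑ t, g t = g 0 + g 1 :=
  Fin.sum_univ_two g

lemma sum_signChar_mul (c : ZMod 2) : ∑ t, signChar R (c * t) = if c = 0 then 2 else 0 := by
  rw [sum_zmod_two]
  obtain rfl | rfl : c = 0 ∨ c = 1 := by revert c; decide
  · rw [mul_zero, mul_one, AddChar.map_zero_eq_one, if_pos rfl, one_add_one_eq_two]
  · simp [signChar_one]

lemma sum_signChar_dotProduct {β : Type*} [Fintype β] [DecidableEq β] (c : β → ZMod 2) :
    ∑ b, signChar R (c ⬝ᵥ b) = if c = 0 then 2 ^ Fintype.card β else 0 := by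
  simp_rw [dotProduct, signChar_sum]
  rw [← Fintype.prod_sum fun j t => signChar R (c j * t)]
  simp_rw [sum_signChar_mul]
  split_ifs with hc
  · simp [hc]
  · obtain ⟨j, hj⟩ := Function.ne_iff.mp hc
    exact prod_eq_zero (mem_univ j) (if_neg hj)

lemma conj_signChar {𝕜 : Type*} [RCLike 𝕜] (t : ZMod 2) :
    (starRingEnd 𝕜) (signChar 𝕜 t) = signChar 𝕜 t := by
  simp [signChar_apply]

lemma ofReal_signChar (t : ZMod 2) : ((signChar ℝ t : ℝ) : ℂ) = signChar ℂ t := by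
  simp [signChar_apply]

end SignCharacter

lemma add_eq_zero_iff_eq_zmod_two {β : Type*} {u v : β → ZMod 2} : u + v = 0 ↔ u = v := by
  rw [add_eq_zero_iff_eq_neg, show -v = v from funext fun j => ZMod.neg_eq_self_mod_two (v j)]

section Walsh

variable {β : Type*} [Fintype β] [DecidableEq β]

noncomputable def walsh {R : Type*} [CommRing R] (G : (β → ZMod 2) → R) (v : β → ZMod 2) : R :=
  ∑ b, signChar R (v ⬝ᵥ b) * G b

theorem sum_norm_walsh_sq {𝕜 : Type*} [RCLike 𝕜] (G : (β → ZMod 2) → 𝕜) :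
    ∑ v, ‖walsh G v‖ ^ 2 = 2 ^ Fintype.card β * ∑ b, ‖G b‖ ^ 2 := by
  have hexpand : ∀ v, walsh G v * starRingEnd 𝕜 (walsh G v) =
      ∑ b, ∑ b', signChar 𝕜 ((b + b') ⬝ᵥ v) * (G b * starRingEnd 𝕜 (G b')) := by
    intro v
    simp only [walsh, map_sum, map_mul, conj_signChar, sum_mul_sum]
    refine sum_congr rfl fun b _ => sum_congr rfl fun b' _ => ?_
    rw [add_dotProduct, dotProduct_comm b, dotProduct_comm b', AddChar.map_add_eq_mul]
    ring
  apply RCLike.ofReal_injective (K := 𝕜)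
  push_cast
  simp_rw [← RCLike.mul_conj]
  calc ∑ v, walsh G v * starRingEnd 𝕜 (walsh G v)
      = ∑ b, ∑ b', (∑ v, signChar 𝕜 ((b + b') ⬝ᵥ v)) * (G b * starRingEnd 𝕜 (G b')) := by
        simp_rw [hexpand, sum_mul]
        rw [sum_comm]
        exact sum_congr rfl fun b _ => sum_comm
    _ = 2 ^ Fintype.card β * ∑ b, G b * starRingEnd 𝕜 (G b) := by
        simp_rw [sum_signChar_dotProduct, add_eq_zero_iff_eq_zmod_two, ite_mul, zero_mul,
          sum_ite_eq, mem_univ, if_true, mul_sum]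

end Walsh

section Fibers

variable {G H : Type*} [AddGroup G] [Fintype G] [AddGroup H] [DecidableEq H]

lemma card_fiber_le_card_ker (f : G →+ H) (v : H) : #{a | f a = v} ≤ #{a | f a = 0} := by
  obtain ⟨a₀, ha₀⟩ | hempty := ({a | f a = v} : Finset G).eq_empty_or_nonempty.symm
  · refine card_le_card_of_injOn (· - a₀) (fun a ha => ?_) (fun a _ b _ h => sub_left_injective h)
    simp_all
  · simp [hempty]

lemma sum_comp_le_card_ker_mul (f : G →+ H) [Fintype H] (g : H → ℝ) (hg : ∀ v, 0 ≤ g v) :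
    ∑ a, g (f a) ≤ #{a | f a = 0} * ∑ v, g v := by
  rw [sum_comp, mul_sum]
  calc ∑ v ∈ univ.image f, #{a | f a = v} • g v
      ≤ ∑ v ∈ univ.image f, (#{a | f a = 0} : ℝ) * g v := by
        gcongr with v
        rw [nsmul_eq_mul]
        exact mul_le_mul_of_nonneg_right (mod_cast card_fiber_le_card_ker f v) (hg v)
    _ ≤ ∑ v, (#{a | f a = 0} : ℝ) * g v :=
        sum_le_sum_of_subset_of_nonneg (subset_univ _) fun v _ _ =>
          mul_nonneg (Nat.cast_nonneg _) (hg v)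

end Fibers

section Bipartite

variable {α β : Type*} [Fintype α] [DecidableEq α] [Fintype β] [DecidableEq β]
  (f : (α → ZMod 2) →+ (β → ZMod 2))

theorem sum_signChar_bipartite_walsh {R : Type*} [CommRing R] (u : α → ZMod 2)
    (v : β → ZMod 2) :
    ∑ a, ∑ b, signChar R (a ⬝ᵥ u + b ⬝ᵥ v + f a ⬝ᵥ b) =
      2 ^ Fintype.card β * ∑ a with f a = v, signChar R (a ⬝ᵥ u) := by
  have hinner : ∀ a, ∑ b, signChar R (a ⬝ᵥ u + b ⬝ᵥ v + f a ⬝ᵥ b) =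
      signChar R (a ⬝ᵥ u) * if f a = v then 2 ^ Fintype.card β else 0 := by
    intro a
    have hphase : ∀ b, a ⬝ᵥ u + b ⬝ᵥ v + f a ⬝ᵥ b = a ⬝ᵥ u + (f a + v) ⬝ᵥ b := fun b => by
      rw [add_dotProduct, dotProduct_comm b]; ring
    simp_rw [hphase, AddChar.map_add_eq_mul, ← mul_sum, sum_signChar_dotProduct,
      add_eq_zero_iff_eq_zmod_two]
  simp_rw [hinner, mul_sum, sum_filter, mul_ite, mul_zero, mul_comm]

lemma abs_sum_signChar_bipartite_walsh_le (u : α → ZMod 2) (v : β → ZMod 2) :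
    |∑ a, ∑ b, signChar ℝ (a ⬝ᵥ u + b ⬝ᵥ v + f a ⬝ᵥ b)| ≤
      2 ^ Fintype.card β * #{a | f a = 0} := by
  rw [sum_signChar_bipartite_walsh, abs_mul, abs_pow, abs_two]
  gcongr
  calc |∑ a with f a = v, signChar ℝ (a ⬝ᵥ u)|
      ≤ ∑ a with f a = v, |signChar ℝ (a ⬝ᵥ u)| := abs_sum_le_sum_abs _ _
    _ = #{a | f a = v} := by simp [← Real.norm_eq_abs]
    _ ≤ #{a | f a = 0} := mod_cast card_fiber_le_card_ker f v

lemma sum_signChar_bipartite {R : Type*} [CommRing R] :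
    ∑ a, ∑ b, signChar R (f a ⬝ᵥ b) = 2 ^ Fintype.card β * #{a | f a = 0} := by
  simpa using sum_signChar_bipartite_walsh f (R := R) 0 0

theorem norm_sum_signChar_bipartite_mul_sq_le {𝕜 : Type*} [RCLike 𝕜]
    (F : (α → ZMod 2) → 𝕜) (G : (β → ZMod 2) → 𝕜) :
    ‖∑ a, ∑ b, signChar 𝕜 (f a ⬝ᵥ b) * (F a * G b)‖ ^ 2 ≤
      2 ^ Fintype.card β * #{a | f a = 0} * (∑ a, ‖F a‖ ^ 2) * ∑ b, ‖G b‖ ^ 2 := by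
  have hwalsh : ∑ a, ∑ b, signChar 𝕜 (f a ⬝ᵥ b) * (F a * G b) = ∑ a, F a * walsh G (f a) := by
    simp_rw [walsh, mul_sum]
    exact sum_congr rfl fun a _ => sum_congr rfl fun b _ => by ring
  rw [hwalsh]
  -- Cauchy–Schwarz over `a`; every value of `f` is taken `≤ #ker f` times; Parseval for `walsh G`.
  calc ‖∑ a, F a * walsh G (f a)‖ ^ 2
      ≤ (∑ a, ‖F a‖ * ‖walsh G (f a)‖) ^ 2 := by
        gcongr
        exact (norm_sum_le _ _).trans_eq (by simp_rw [norm_mul])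
    _ ≤ (∑ a, ‖F a‖ ^ 2) * ∑ a, ‖walsh G (f a)‖ ^ 2 := sum_mul_sq_le_sq_mul_sq _ _ _
    _ ≤ (∑ a, ‖F a‖ ^ 2) * (#{a | f a = 0} * ∑ v, ‖walsh G v‖ ^ 2) := by
        gcongr
        exact sum_comp_le_card_ker_mul f (fun v => ‖walsh G v‖ ^ 2) fun v => by positivity
    _ = _ := by
        rw [sum_norm_walsh_sq]
        ring

end Bipartite

section Split

variable {ι : Type*} [Fintype ι] [DecidableEq ι] (S : Finset ι)

lemma sum_pi_eq_sum_sum_subtype {γ M : Type*} [Fintype γ] [AddCommMonoid M]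
    (g : ({i // i ∈ S} → γ) → ({j // j ∉ S} → γ) → M) :
    ∑ x : ι → γ, g (fun i => x i) (fun j => x j) = ∑ a, ∑ b, g a b :=
  (Fintype.sum_equiv (Equiv.piEquivPiSubtypeProd (· ∈ S) fun _ => γ) _ (fun ab => g ab.1 ab.2)
    fun _ => rfl).trans (Fintype.sum_prod_type _)

@[to_additive]
lemma prod_eq_prod_subtype_mul_prod_subtype {M : Type*} [CommMonoid M] (g : ι → M) :
    ∏ i, g i = (∏ i : {i // i ∈ S}, g i) * ∏ j : {j // j ∉ S}, g j := by
  convert (Fintype.prod_subtype_mul_prod_subtype (· ∈ S) g).symm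

lemma dotProduct_eq_add_subtype {R : Type*} [CommRing R] (x w : ι → R) :
    x ⬝ᵥ w = (fun i : {i // i ∈ S} => x i) ⬝ᵥ (fun i => w i) +
      (fun j : {j // j ∉ S} => x j) ⬝ᵥ (fun j => w j) :=
  sum_eq_sum_subtype_add_sum_subtype S _

noncomputable def crossMap (M : ι → ι → ZMod 2) :
    ({i // i ∈ S} → ZMod 2) →+ ({j // j ∉ S} → ZMod 2) :=
  (vecMulLinear (Matrix.of fun (i : {i // i ∈ S}) (j : {j // j ∉ S}) => M i j)).toAddMonoidHom

lemma sum_sum_compl_eq_crossMap_dotProduct (M : ι → ι → ZMod 2) (x : ι → ZMod 2) :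
    ∑ i ∈ S, ∑ j ∈ Sᶜ, M i j * x i * x j =
      crossMap S M (fun i => x i) ⬝ᵥ fun j => x j := by
  rw [sum_subtype S (p := (· ∈ S)) fun _ => Iff.rfl]
  simp_rw [sum_subtype Sᶜ (p := (· ∉ S)) fun _ => mem_compl]
  simp only [crossMap, LinearMap.toAddMonoidHom_coe, vecMulLinear_apply, vecMul, dotProduct,
    of_apply, sum_mul]
  rw [sum_comm]
  exact sum_congr rfl fun j _ => sum_congr rfl fun i _ => by ring

end Split

lemma sum_norm_prod_sq {α 𝕜 : Type*} [Fintype α] [DecidableEq α] [RCLike 𝕜] (l : α → ZMod 2 → 𝕜)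
    (hl : ∀ i, ‖l i 0‖ ^ 2 + ‖l i 1‖ ^ 2 = 1) :
    ∑ a : α → ZMod 2, ‖∏ i, l i (a i)‖ ^ 2 = 1 := by
  simp_rw [norm_prod, ← prod_pow]
  rw [← Fintype.prod_sum fun i t => ‖l i t‖ ^ 2]
  simp [sum_zmod_two, hl]

section States

variable {n : ℕ}

noncomputable def bipartiteState (S : Finset (Fin n)) (M : Fin n → Fin n → ZMod 2)
    (x : Fin n → ZMod 2) : ℝ :=
  (√(2 ^ n))⁻¹ * signChar ℝ (∑ i ∈ S, ∑ j ∈ Sᶜ, M i j * x i * x j)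

noncomputable def walshCoeff (s : (Fin n → ZMod 2) → ℝ) (w : Fin n → ZMod 2) : ℝ :=
  (√(2 ^ n))⁻¹ * ∑ x, signChar ℝ (x ⬝ᵥ w) * s x

def productOverlaps (s : (Fin n → ZMod 2) → ℝ) : Set ℝ :=
  {r | ∃ l : Fin n → ZMod 2 → ℂ, (∀ i, ‖l i 0‖ ^ 2 + ‖l i 1‖ ^ 2 = 1) ∧
    r = ‖∑ x, (s x : ℂ) * starRingEnd ℂ (∏ i, l i (x i))‖ ^ 2}

lemma walshCoeff_sq_mem_productOverlaps (s : (Fin n → ZMod 2) → ℝ) (w : Fin n → ZMod 2) :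
    walshCoeff s w ^ 2 ∈ productOverlaps s := by
  refine ⟨fun i t => (((√2)⁻¹ : ℝ) : ℂ) * signChar ℂ (t * w i), fun i => ?_, ?_⟩
  · simp only [norm_mul, AddChar.norm_apply, mul_one, Complex.norm_real, norm_inv,
      Real.norm_eq_abs, inv_pow, sq_abs, Real.sq_sqrt zero_le_two]
    norm_num
  · have hprod : ∀ x : Fin n → ZMod 2, ∏ i, (((√2)⁻¹ : ℝ) : ℂ) * signChar ℂ (x i * w i) =
        (((√(2 ^ n))⁻¹ : ℝ) : ℂ) * signChar ℂ (x ⬝ᵥ w) := by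
      intro x
      have hsqrt : √((2 : ℝ) ^ n) = √2 ^ n := by
        rw [Real.sqrt_eq_iff_mul_self_eq (by positivity) (by positivity), ← mul_pow,
          Real.mul_self_sqrt zero_le_two]
      rw [prod_mul_distrib, prod_const, card_univ, Fintype.card_fin, dotProduct, signChar_sum,
        hsqrt]
      push_cast
      ring
    simp_rw [hprod, map_mul, Complex.conj_ofReal, conj_signChar, ← ofReal_signChar,
      ← Complex.ofReal_mul, ← Complex.ofReal_sum, Complex.norm_real, Real.norm_eq_abs,
      sq_abs, walshCoeff, mul_sum]
    exact congrArg (· ^ 2) (sum_congr rfl fun x _ => by ring)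

variable (S : Finset (Fin n)) (M : Fin n → Fin n → ZMod 2)

lemma walshCoeff_bipartiteState (w : Fin n → ZMod 2) :
    walshCoeff (bipartiteState S M) w = (2 ^ n)⁻¹ * ∑ a, ∑ b,
      signChar ℝ (a ⬝ᵥ (fun i : {i // i ∈ S} => w i) + b ⬝ᵥ (fun j : {j // j ∉ S} => w j) +
        crossMap S M a ⬝ᵥ b) := by
  have hsqrt : (√(2 ^ n : ℝ))⁻¹ * (√(2 ^ n))⁻¹ = (2 ^ n)⁻¹ := by
    rw [← mul_inv, Real.mul_self_sqrt (by positivity)]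
  have hterm : ∀ x, signChar ℝ (x ⬝ᵥ w) * bipartiteState S M x = (√(2 ^ n))⁻¹ *
      signChar ℝ ((fun i : {i // i ∈ S} => x i) ⬝ᵥ (fun i => w i) +
        (fun j : {j // j ∉ S} => x j) ⬝ᵥ (fun j => w j) +
        crossMap S M (fun i => x i) ⬝ᵥ fun j => x j) := by
    intro x
    rw [bipartiteState, sum_sum_compl_eq_crossMap_dotProduct, dotProduct_eq_add_subtype S,
      AddChar.map_add_eq_mul (signChar ℝ) (_ + _)]
    ring
  rw [walshCoeff, sum_congr rfl fun x _ => hterm x, ← mul_sum, ← mul_assoc, hsqrt,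
    sum_pi_eq_sum_sum_subtype S fun a b => signChar ℝ (a ⬝ᵥ (fun i : {i // i ∈ S} => w i) +
      b ⬝ᵥ (fun j : {j // j ∉ S} => w j) + crossMap S M a ⬝ᵥ b)]

lemma walshCoeff_bipartiteState_zero :
    walshCoeff (bipartiteState S M) 0 =
      (2 ^ n)⁻¹ * (2 ^ Fintype.card {j // j ∉ S} * #{a | crossMap S M a = 0}) := by
  rw [walshCoeff_bipartiteState]
  simp only [Pi.zero_apply]
  simp only [← Pi.zero_def, dotProduct_zero, add_zero, zero_add, sum_signChar_bipartite]

lemma abs_walshCoeff_bipartiteState_le (w : Fin n → ZMod 2) :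
    |walshCoeff (bipartiteState S M) w| ≤ walshCoeff (bipartiteState S M) 0 := by
  rw [walshCoeff_bipartiteState, walshCoeff_bipartiteState_zero, abs_mul, abs_inv, abs_pow,
    abs_two]
  exact mul_le_mul_of_nonneg_left (abs_sum_signChar_bipartite_walsh_le _ _ _) (by positivity)

lemma iSup_walshCoeff_sq_bipartiteState :
    ⨆ w, walshCoeff (bipartiteState S M) w ^ 2 = walshCoeff (bipartiteState S M) 0 ^ 2 :=
  le_antisymm
    (ciSup_le fun w => sq_le_sq.mpr ((abs_walshCoeff_bipartiteState_le S M w).trans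
      (le_abs_self _)))
    (le_ciSup (f := fun w => walshCoeff (bipartiteState S M) w ^ 2) (Finite.bddAbove_range _) 0)

lemma le_walshCoeff_zero_of_mem_productOverlaps {r : ℝ}
    (hr : r ∈ productOverlaps (bipartiteState S M)) :
    r ≤ walshCoeff (bipartiteState S M) 0 := by
  obtain ⟨l, hl, rfl⟩ := hr
  set F := fun a : {i // i ∈ S} → ZMod 2 => starRingEnd ℂ (∏ i : {i // i ∈ S}, l i (a i))
  set G := fun b : {j // j ∉ S} → ZMod 2 => starRingEnd ℂ (∏ j : {j // j ∉ S}, l j (b j))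
  have hterm : ∀ x, (bipartiteState S M x : ℂ) * starRingEnd ℂ (∏ i, l i (x i)) =
      ((√(2 ^ n))⁻¹ : ℝ) * (signChar ℂ (crossMap S M (fun i => x i) ⬝ᵥ fun j => x j) *
        (F (fun i => x i) * G fun j => x j)) := by
    intro x
    rw [bipartiteState, sum_sum_compl_eq_crossMap_dotProduct,
      prod_eq_prod_subtype_mul_prod_subtype S, map_mul]
    push_cast [ofReal_signChar]
    ring
  rw [sum_congr rfl fun x _ => hterm x, ← mul_sum,
    sum_pi_eq_sum_sum_subtype S fun a b => signChar ℂ (crossMap S M a ⬝ᵥ b) * (F a * G b),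
    norm_mul, mul_pow, Complex.norm_real, norm_inv, Real.norm_of_nonneg (by positivity),
    inv_pow, Real.sq_sqrt (by positivity), walshCoeff_bipartiteState_zero]
  have hF : ∑ a, ‖F a‖ ^ 2 = 1 := by
    simpa [F] using sum_norm_prod_sq (fun i : {i // i ∈ S} => l i) fun i => hl i
  have hG : ∑ b, ‖G b‖ ^ 2 = 1 := by
    simpa [G] using sum_norm_prod_sq (fun j : {j // j ∉ S} => l j) fun j => hl j
  gcongr
  simpa [hF, hG] using norm_sum_signChar_bipartite_mul_sq_le (crossMap S M) F G

lemma mul_eq_rpow_of_mul_sq_eq {N : ℕ} (hN : N ≤ n) {c : ℝ} (hc : 0 ≤ c)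
    (h : 2 ^ n * c ^ 2 = 2 ^ (n - N)) : 2 ^ n * c = (2 : ℝ) ^ ((n : ℝ) - N / 2) := by
  have hlhs : (2 ^ n * c) ^ 2 = (2 : ℝ) ^ (n + (n - N)) := by
    rw [pow_add, ← h]
    ring
  have hrhs : ((2 : ℝ) ^ ((n : ℝ) - N / 2)) ^ 2 = (2 : ℝ) ^ (n + (n - N)) := by
    rw [← Real.rpow_natCast 2 (n + (n - N)), ← Real.rpow_mul_natCast zero_le_two]
    push_cast [Nat.cast_sub hN]
    ring_nf
  exact (pow_left_inj₀ (by positivity) (by positivity) two_ne_zero).mp (hlhs.trans hrhs.symm)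

end States

end BipartiteQuadraticState

open BipartiteQuadraticState

/-- For a bipartite quadratic phase state `s = 2^{−n/2}(−1)^{p(x)}` with
nonlinear order `N = n − log₂ PAR(WHT(s))`, we have
`2^(n−N) ≤ PAR_l(s) ≤ 2^(n−N/2)`. -/
theorem stmt_17 (n N : ℕ) (hN : N ≤ n)
    (p : (Fin n → ZMod 2) → ZMod 2)
    (hbip : ∃ (S : Finset (Fin n)) (M : Fin n → Fin n → ZMod 2),
      ∀ x, p x = ∑ i ∈ S, ∑ j ∈ Sᶜ, M i j * x i * x j)
    (s : (Fin n → ZMod 2) → ℝ)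
    (hs : ∀ x, s x = (Real.sqrt (2 ^ n))⁻¹ * (-1 : ℝ) ^ (p x).val)
    (hNdef : (2 : ℝ) ^ n *
        (⨆ w : Fin n → ZMod 2,
          ((Real.sqrt (2 ^ n))⁻¹ *
            ∑ x : Fin n → ZMod 2, (-1 : ℝ) ^ ((∑ i, x i * w i).val) * s x) ^ 2)
      = 2 ^ (n - N))
    (PARl : ℝ)
    (hPAR : PARl = 2 ^ n * sSup { r : ℝ |
        ∃ l : Fin n → (ZMod 2 → ℂ),
          (∀ i, ‖l i 0‖ ^ 2 + ‖l i 1‖ ^ 2 = 1) ∧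
          r = ‖∑ x : Fin n → ZMod 2,
                (s x : ℂ) * (starRingEnd ℂ) (∏ i, l i (x i))‖ ^ 2 }) :
    (2 : ℝ) ^ (n - N) ≤ PARl ∧ PARl ≤ (2 : ℝ) ^ ((n : ℝ) - (N : ℝ) / 2) := by
  obtain ⟨S, M, hp⟩ := hbip
  obtain rfl : s = bipartiteState S M := funext fun x => by rw [hs, hp]; rfl
  set c := walshCoeff (bipartiteState S M) 0
  have hc : 2 ^ n * c ^ 2 = 2 ^ (n - N) := by
    rw [← iSup_walshCoeff_sq_bipartiteState]
    exact hNdef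
  have hc_nonneg : 0 ≤ c := (abs_nonneg _).trans (abs_walshCoeff_bipartiteState_le S M 0)
  have hbdd : BddAbove (productOverlaps (bipartiteState S M)) :=
    ⟨c, fun _ => le_walshCoeff_zero_of_mem_productOverlaps S M⟩
  subst hPAR
  constructor
  · rw [← hc]
    gcongr
    exact le_csSup hbdd (walshCoeff_sq_mem_productOverlaps _ 0)
  · rw [← mul_eq_rpow_of_mul_sq_eq hN hc_nonneg hc]
    gcongr
    exact Real.sSup_le (fun _ => le_walshCoeff_zero_of_mem_productOverlaps S M) hc_nonneg
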